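/- Let 0 < α < 1 and I = [0, T) with 0 < T ≤ ∞. Let b, g : I → ℝ be nonnegative functions on I, both bounded above by a positive constant M, and let u : I → ℝ be nonnegative and locally integrable on I. For an integer n ≥ 1, define H_n(t) = ∑_{i=0}^{n} C(n,i) · b(t)^{n−i} · g(t)^{i} · (Γ(α))^{i} / Γ(iα + n − i) · ∫₀ᵗ (t − s)^{iα + n − i − 1} u(s) ds. Then for every fixed t ∈ I, H_n(t) → 0 as n → ∞. -/

import Mathlib

/-!
Write `β_i = iα + n - i`; since `0 < α ≤ 1` and `i ≤ n`, `nα ≤ β_i ≤ n`. Once `nα ≥ 2`, Gamma is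
increasing on `[nα, ∞)`, so every `Γ(β_i)` is at least `Γ(nα)`, while `(t - s)^(β_i - 1) ≤ max t 1 ^ n`.
Summing the binomial coefficients gives `H_n(t) ≤ A^n / Γ(nα) · ∫₀ᵗ u` for a constant `A`, and
`A^n / Γ(nα) → 0` because `Γ(nα) ≥ ⌊nα - 1⌋!` while `A^n ≤ (A^⌈1/α⌉)^(⌊nα - 1⌋ + 2)`.
-/

open MeasureTheory Real Finset Filter

open scoped Nat Topology

theorem Nat.factorial_floor_le_Gamma_add_one {x : ℝ} (hx : 1 ≤ x) :
    (⌊x⌋₊ ! : ℝ) ≤ Gamma (x + 1) := by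
  have hfloor : (2 : ℝ) ≤ ⌊x⌋₊ + 1 := by
    have : 1 ≤ ⌊x⌋₊ := Nat.le_floor (by exact_mod_cast hx)
    exact_mod_cast Nat.succ_le_succ this
  rw [← Gamma_nat_eq_factorial]
  exact Gamma_strictMonoOn_Ici.monotoneOn hfloor (by simp only [Set.mem_Ici]; linarith)
    (by gcongr; exact Nat.floor_le (by linarith))

theorem tendsto_pow_div_Gamma_mul_atTop (C : ℝ) {α : ℝ} (hα : 0 < α) :
    Tendsto (fun n : ℕ => C ^ n / Gamma (n * α)) atTop (𝓝 0) := by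
  set D := max |C| 1
  set E := D ^ ⌈α⁻¹⌉₊
  set m : ℕ → ℕ := fun n => ⌊n * α - 1⌋₊
  have hnα : Tendsto (fun n : ℕ => n * α) atTop atTop :=
    tendsto_natCast_atTop_atTop.atTop_mul_const hα
  have hm : Tendsto m atTop atTop :=
    tendsto_nat_floor_atTop.comp (tendsto_atTop_add_const_right _ (-1) hnα)
  have hlim : Tendsto (fun n => E ^ 2 * (E ^ m n / (m n)!)) atTop (𝓝 0) := by
    simpa using ((FloorSemiring.tendsto_pow_div_factorial_atTop E).comp hm).const_mul (E ^ 2)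
  refine squeeze_zero_norm' ?_ hlim
  filter_upwards [hnα.eventually_ge_atTop 2] with n hn
  have hpow : D ^ n ≤ E ^ (m n + 2) := by
    rw [← pow_mul]
    refine pow_le_pow_right₀ (le_max_right _ _) ?_
    have hlt : (n : ℝ) * α < m n + 2 := by
      have := Nat.lt_floor_add_one ((n : ℝ) * α - 1)
      linarith
    have : (n : ℝ) ≤ ⌈α⁻¹⌉₊ * (m n + 2) :=
      calc (n : ℝ) = n * α * α⁻¹ := by field_simp
        _ ≤ (m n + 2) * ⌈α⁻¹⌉₊ :=
          mul_le_mul hlt.le (Nat.le_ceil _) (by positivity) (by positivity)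
        _ = ⌈α⁻¹⌉₊ * (m n + 2) := mul_comm _ _
    exact_mod_cast this
  have hΓ : ((m n)! : ℝ) ≤ Gamma (n * α) := by
    have := Nat.factorial_floor_le_Gamma_add_one (x := n * α - 1) (by linarith)
    rwa [sub_add_cancel] at this
  rw [norm_div, norm_pow, Real.norm_eq_abs, Real.norm_eq_abs, abs_of_pos (Gamma_pos_of_pos (by linarith))]
  calc |C| ^ n / Gamma (n * α) ≤ D ^ n / (m n)! :=
        div_le_div₀ (by positivity) (pow_le_pow_left₀ (abs_nonneg _) (le_max_left _ _) _)
          (by positivity) hΓ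
    _ ≤ E ^ (m n + 2) / (m n)! := by gcongr
    _ = E ^ 2 * (E ^ m n / (m n)!) := by ring

section

variable {u : ℝ → ℝ} {t : ℝ}

theorem integral_sub_rpow_mul_nonneg (ht : 0 ≤ t) (hu0 : ∀ s ∈ Set.Icc 0 t, 0 ≤ u s) (p : ℝ) :
    0 ≤ ∫ s in (0 : ℝ)..t, (t - s) ^ p * u s :=
  intervalIntegral.integral_nonneg ht fun s hs =>
    mul_nonneg (rpow_nonneg (by linarith [hs.2]) _) (hu0 s hs)

theorem integral_sub_rpow_mul_le {p : ℝ} (ht : 0 ≤ t) (hp : 0 ≤ p)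
    (hu : IntervalIntegrable u volume 0 t) (hu0 : ∀ s ∈ Set.Icc 0 t, 0 ≤ u s) :
    ∫ s in (0 : ℝ)..t, (t - s) ^ p * u s ≤ t ^ p * ∫ s in (0 : ℝ)..t, u s := by
  rw [← intervalIntegral.integral_const_mul]
  refine intervalIntegral.integral_mono_on ht ?_ (hu.const_mul _) fun s hs => ?_
  · exact hu.continuousOn_mul
      ((continuous_const.sub continuous_id).continuousOn.rpow_const fun _ _ => Or.inr hp)
  · exact mul_le_mul_of_nonneg_right
      (rpow_le_rpow (by linarith [hs.2]) (by linarith [hs.1]) hp) (hu0 s hs)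

end

/-- The paper's `H_N(t)`, with the numbers `a`, `c` in place of `b(t)`, `g(t)`. -/
noncomputable def binomialFractionalSum (α a c t : ℝ) (u : ℝ → ℝ) (N : ℕ) : ℝ :=
  ∑ i ∈ range (N + 1), (N.choose i : ℝ) * a ^ (N - i) * c ^ i * Gamma α ^ i /
    Gamma ((i : ℝ) * α + N - i) * ∫ s in (0 : ℝ)..t, (t - s) ^ ((i : ℝ) * α + N - i - 1) * u s

section

variable {α a c M t : ℝ} {u : ℝ → ℝ} {N : ℕ}

theorem binomialFractionalSum_nonneg (hα0 : 0 ≤ α) (ha : 0 ≤ a) (hc : 0 ≤ c)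
    (ht : 0 ≤ t) (hu0 : ∀ s ∈ Set.Icc 0 t, 0 ≤ u s) :
    0 ≤ binomialFractionalSum α a c t u N := by
  refine sum_nonneg fun i hi => ?_
  have hi : (i : ℝ) ≤ N := by exact_mod_cast Nat.lt_succ_iff.mp (mem_range.mp hi)
  have hΓ : 0 ≤ Gamma ((i : ℝ) * α + N - i) := Gamma_nonneg_of_nonneg (by nlinarith)
  have hint := integral_sub_rpow_mul_nonneg ht hu0 ((i : ℝ) * α + N - i - 1)
  have hΓα := Gamma_nonneg_of_nonneg hα0
  positivity

theorem binomialFractionalSum_le (hα1 : α ≤ 1) (hN : 2 ≤ N * α) (ha : 0 ≤ a) (haM : a ≤ M)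
    (hc : 0 ≤ c) (hcM : c ≤ M) (ht : 0 ≤ t) (hu : IntervalIntegrable u volume 0 t)
    (hu0 : ∀ s ∈ Set.Icc 0 t, 0 ≤ u s) :
    binomialFractionalSum α a c t u N ≤
      (2 * (M * max (Gamma α) 1 * max t 1)) ^ N / Gamma (N * α) * ∫ s in (0 : ℝ)..t, u s := by
  set G := max (Gamma α) 1
  set K := max t 1
  set I := ∫ s in (0 : ℝ)..t, u s
  have hα0 : 0 < α := by
    by_contra! h
    nlinarith [(Nat.cast_nonneg N : (0 : ℝ) ≤ N)]
  have hM : 0 ≤ M := ha.trans haM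
  have hI : 0 ≤ I := intervalIntegral.integral_nonneg ht hu0
  have hΓN : 0 < Gamma (N * α) := Gamma_pos_of_pos (by linarith)
  have hterm : ∀ i ∈ range (N + 1),
      (N.choose i : ℝ) * a ^ (N - i) * c ^ i * Gamma α ^ i / Gamma ((i : ℝ) * α + N - i) *
        (∫ s in (0 : ℝ)..t, (t - s) ^ ((i : ℝ) * α + N - i - 1) * u s) ≤
      N.choose i * ((M * G * K) ^ N * I) / Gamma (N * α) := by
    intro i hi
    have hi : i ≤ N := Nat.lt_succ_iff.mp (mem_range.mp hi)
    have hiR : (i : ℝ) ≤ N := by exact_mod_cast hi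
    set β := (i : ℝ) * α + N - i
    have hβ_lo : N * α ≤ β := by nlinarith
    have hβ_hi : β ≤ N := by nlinarith
    have hΓ : Gamma (N * α) ≤ Gamma β :=
      Gamma_strictMonoOn_Ici.monotoneOn hN (hN.trans hβ_lo) hβ_lo
    have hcoef : a ^ (N - i) * c ^ i * Gamma α ^ i ≤ (M * G) ^ N :=
      calc a ^ (N - i) * c ^ i * Gamma α ^ i ≤ M ^ (N - i) * M ^ i * G ^ N := by
            have hΓG : Gamma α ^ i ≤ G ^ N :=
              (pow_le_pow_left₀ (Gamma_pos_of_pos hα0).le (le_max_left _ _) i).trans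
                (pow_le_pow_right₀ (le_max_right _ _) hi)
            gcongr
        _ = (M * G) ^ N := by rw [← pow_add, Nat.sub_add_cancel hi, mul_pow]
    have hK : t ^ (β - 1) ≤ K ^ N :=
      calc t ^ (β - 1) ≤ K ^ (β - 1) := rpow_le_rpow ht (le_max_left _ _) (by linarith)
        _ ≤ K ^ (N : ℝ) := rpow_le_rpow_of_exponent_le (le_max_right _ _) (by linarith)
        _ = K ^ N := rpow_natCast _ _
    have hint : ∫ s in (0 : ℝ)..t, (t - s) ^ (β - 1) * u s ≤ K ^ N * I :=
      (integral_sub_rpow_mul_le ht (by linarith) hu hu0).trans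
        (mul_le_mul_of_nonneg_right hK hI)
    have hint0 := integral_sub_rpow_mul_nonneg ht hu0 (β - 1)
    calc (N.choose i : ℝ) * a ^ (N - i) * c ^ i * Gamma α ^ i / Gamma β *
          ∫ s in (0 : ℝ)..t, (t - s) ^ (β - 1) * u s
        = N.choose i * (a ^ (N - i) * c ^ i * Gamma α ^ i) *
          (∫ s in (0 : ℝ)..t, (t - s) ^ (β - 1) * u s) / Gamma β := by ring
      _ ≤ N.choose i * (M * G) ^ N * (K ^ N * I) / Gamma (N * α) := by gcongr
      _ = N.choose i * ((M * G * K) ^ N * I) / Gamma (N * α) := by ring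
  calc binomialFractionalSum α a c t u N
      ≤ ∑ i ∈ range (N + 1), N.choose i * ((M * G * K) ^ N * I) / Gamma (N * α) :=
        sum_le_sum hterm
    _ = 2 ^ N * ((M * G * K) ^ N * I) / Gamma (N * α) := by
        rw [← sum_div, ← sum_mul, ← Nat.cast_sum, Nat.sum_range_choose]
        push_cast
        rfl
    _ = (2 * (M * G * K)) ^ N / Gamma (N * α) * I := by ring

theorem tendsto_binomialFractionalSum_atTop (hα0 : 0 < α) (hα1 : α ≤ 1) (ha : 0 ≤ a)
    (haM : a ≤ M) (hc : 0 ≤ c) (hcM : c ≤ M) (ht : 0 ≤ t) (hu : IntervalIntegrable u volume 0 t)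
    (hu0 : ∀ s ∈ Set.Icc 0 t, 0 ≤ u s) :
    Tendsto (binomialFractionalSum α a c t u) atTop (𝓝 0) := by
  have hlim := (tendsto_pow_div_Gamma_mul_atTop
    (2 * (M * max (Gamma α) 1 * max t 1)) hα0).mul_const (∫ s in (0 : ℝ)..t, u s)
  rw [zero_mul] at hlim
  refine squeeze_zero' (Eventually.of_forall fun N =>
    binomialFractionalSum_nonneg hα0.le ha hc ht hu0) ?_ hlim
  filter_upwards [(tendsto_natCast_atTop_atTop.atTop_mul_const hα0).eventually_ge_atTop 2]
    with N hN
  exact binomialFractionalSum_le hα1 hN ha haM hc hcM ht hu hu0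

end

theorem Hn_tendsto_zero_general
    (α : ℝ) (hα0 : 0 < α) (hα1 : α < 1)
    (T : EReal)
    (b g u : ℝ → ℝ) (M : ℝ)
    (hb_nonneg : ∀ t : ℝ, 0 ≤ t → (t : EReal) < T → 0 ≤ b t)
    (hb_bdd : ∀ t : ℝ, 0 ≤ t → (t : EReal) < T → b t ≤ M)
    (hg_nonneg : ∀ t : ℝ, 0 ≤ t → (t : EReal) < T → 0 ≤ g t)
    (hg_bdd : ∀ t : ℝ, 0 ≤ t → (t : EReal) < T → g t ≤ M)
    (hu_nonneg : ∀ t : ℝ, 0 ≤ t → (t : EReal) < T → 0 ≤ u t)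
    (hu_int : ∀ t : ℝ, 0 ≤ t → (t : EReal) < T → IntervalIntegrable u volume 0 t) :
    ∀ t : ℝ, 0 ≤ t → (t : EReal) < T →
      Tendsto (fun n : ℕ => ∑ i ∈ Finset.range (n + 1 + 1),
        ((n + 1).choose i : ℝ) * b t ^ (n + 1 - i) * g t ^ i *
          Real.Gamma α ^ i / Real.Gamma ((i : ℝ) * α + ((n : ℝ) + 1) - (i : ℝ)) *
          ∫ s in (0:ℝ)..t, (t - s) ^ ((i : ℝ) * α + ((n : ℝ) + 1) - (i : ℝ) - 1) * u s)
        atTop (nhds 0) := by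
  intro t ht htT
  have hu0 : ∀ s ∈ Set.Icc 0 t, 0 ≤ u s := fun s hs =>
    hu_nonneg s hs.1 ((EReal.coe_le_coe_iff.2 hs.2).trans_lt htT)
  have h := (tendsto_add_atTop_iff_nat 1).2 <| tendsto_binomialFractionalSum_atTop hα0 hα1.le
    (hb_nonneg t ht htT) (hb_bdd t ht htT) (hg_nonneg t ht htT) (hg_bdd t ht htT) ht
    (hu_int t ht htT) hu0
  simpa only [binomialFractionalSum, Nat.cast_succ] using h

/-- Second claim in the proof of Theorem 2.1: for each fixed `t ∈ [0,T)`,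
`H_n(t) → 0` as `n → ∞`. -/
theorem Hn_tendsto_zero
    (α : ℝ) (hα0 : 0 < α) (hα1 : α < 1)
    (T : EReal) (hT : 0 < T)
    (b g u : ℝ → ℝ) (M : ℝ) (hM : 0 < M)
    (hb_nonneg : ∀ t : ℝ, 0 ≤ t → (t : EReal) < T → 0 ≤ b t)
    (hb_bdd : ∀ t : ℝ, 0 ≤ t → (t : EReal) < T → b t ≤ M)
    (hg_nonneg : ∀ t : ℝ, 0 ≤ t → (t : EReal) < T → 0 ≤ g t)
    (hg_bdd : ∀ t : ℝ, 0 ≤ t → (t : EReal) < T → g t ≤ M)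
    (hu_nonneg : ∀ t : ℝ, 0 ≤ t → (t : EReal) < T → 0 ≤ u t)
    (hu_int : ∀ t : ℝ, 0 ≤ t → (t : EReal) < T → IntervalIntegrable u volume 0 t) :
    ∀ t : ℝ, 0 ≤ t → (t : EReal) < T →
      Tendsto (fun n : ℕ => ∑ i ∈ Finset.range (n + 1 + 1),
        ((n + 1).choose i : ℝ) * b t ^ (n + 1 - i) * g t ^ i *
          Real.Gamma α ^ i / Real.Gamma ((i : ℝ) * α + ((n : ℝ) + 1) - (i : ℝ)) *
          ∫ s in (0:ℝ)..t, (t - s) ^ ((i : ℝ) * α + ((n : ℝ) + 1) - (i : ℝ) - 1) * u s)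
        atTop (nhds 0) :=
  Hn_tendsto_zero_general α hα0 hα1 T b g u M hb_nonneg hb_bdd hg_nonneg hg_bdd hu_nonneg hu_int
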